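/- Let (ζ_j^{(1)})_{j≥0}, (ζ_j^{(2)})_{j≥0} be jointly independent standard Gaussian random variables and set S_q = (T−t)/2 · (ζ_0^{(1)} ζ_0^{(2)} + ∑_{j=1}^q (1/√(4j²−1)) (ζ_{j−1}^{(1)} ζ_j^{(2)} − ζ_j^{(1)} ζ_{j−1}^{(2)})). Then the sequence (S_q)_{q≥1} is Cauchy in L²(Ω), and for p < q, E[(S_q − S_p)²] = ((T−t)²/2) ∑_{j=p+1}^q 1/(4j²−1). -/

import Mathlib

/-!
The terms `ζ⁰_{j-1} ζ¹_j - ζ⁰_j ζ¹_{j-1}` (`j ≥ 1`) are orthogonal in `L²`, each with second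
moment `2`: by independence `E[ζ⁰_a ζ¹_b ζ⁰_c ζ¹_d] = δ_{ac} δ_{bd}`, so the two direct pairings
contribute `δ_{jk}` each, while the two crossed ones would need `j - 1 = k` and `j = k - 1` at once. So `E[(S_q - S_p)²]` is the Pythagorean
sum `(T-t)²/2 ∑_{p<j≤q} 1/(4j²-1)`, which telescopes to `(T-t)²/4 (1/(2p+1) - 1/(2q+1))` and
hence tends to `0` as `p, q → ∞`.
-/

open MeasureTheory ProbabilityTheory Filter
open scoped NNReal ENNReal

section General

variable {Ω : Type*} [MeasurableSpace Ω] {μ : Measure Ω}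

lemma hasLaw_of_map_eq {E : Type*} [MeasurableSpace E] {X : Ω → E} {ν : Measure E}
    [IsProbabilityMeasure ν] (h : μ.map X = ν) : HasLaw X ν μ :=
  ⟨AEMeasurable.of_map_ne_zero (h ▸ IsProbabilityMeasure.ne_zero ν), h⟩

lemma integral_sq_gaussianReal_zero (v : ℝ≥0) : ∫ x, x ^ 2 ∂gaussianReal 0 v = v := by
  rw [← variance_fun_id_gaussianReal (μ := 0) (v := v), variance_eq_integral aemeasurable_id']
  simp

lemma ProbabilityTheory.HasLaw.memLp_gaussianReal {X : Ω → ℝ} {m : ℝ} {v : ℝ≥0}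
    (hX : HasLaw X (gaussianReal m v) μ) (p : ℝ≥0) : MemLp X p μ := by
  have := memLp_id_gaussianReal (μ := m) (v := v) p
  rw [← hX.map_eq] at this
  exact (memLp_map_measure_iff aestronglyMeasurable_id hX.aemeasurable).1 this

lemma ProbabilityTheory.HasLaw.integral_gaussianReal {X : Ω → ℝ} {m : ℝ} {v : ℝ≥0}
    (hX : HasLaw X (gaussianReal m v) μ) : ∫ ω, X ω ∂μ = m := by
  rw [hX.integral_eq, integral_id_gaussianReal]

lemma ProbabilityTheory.HasLaw.integral_sq_gaussianReal {X : Ω → ℝ} {v : ℝ≥0}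
    (hX : HasLaw X (gaussianReal 0 v) μ) : ∫ ω, X ω ^ 2 ∂μ = v := by
  rw [← integral_sq_gaussianReal_zero v, ← hX.integral_comp (f := fun x => x ^ 2) (by fun_prop)]
  rfl

lemma memLp_two_mul_of_memLp_four {X Y : Ω → ℝ} (hX : MemLp X 4 μ) (hY : MemLp Y 4 μ) :
    MemLp (fun ω => X ω * Y ω) 2 μ := by
  have : ENNReal.HolderTriple 4 4 2 := ⟨by
    rw [← two_mul, show (4 : ℝ≥0∞) = 2 * 2 by norm_num, ENNReal.mul_inv (by simp) (by simp),
      ← mul_assoc, ENNReal.mul_inv_cancel (by simp) (by simp), one_mul]⟩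
  exact hY.mul hX

lemma integral_mul_eq_ite_of_iIndepFun {ι : Type*} [DecidableEq ι]
    {X : ι → Ω → ℝ} (hX : iIndepFun X μ) (hmeas : ∀ i, AEMeasurable (X i) μ)
    (hmean : ∀ i, ∫ ω, X i ω ∂μ = 0) (hsq : ∀ i, ∫ ω, X i ω ^ 2 ∂μ = 1) (i j : ι) :
    ∫ ω, X i ω * X j ω ∂μ = if i = j then 1 else 0 := by
  split_ifs with hij
  · subst hij
    simpa [sq] using hsq i
  · rw [(hX.indepFun hij).integral_fun_mul_eq_mul_integral (hmeas i).aestronglyMeasurable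
      (hmeas j).aestronglyMeasurable, hmean i, zero_mul]

lemma integral_mul_mul_mul_of_iIndepFun {ι : Type*}
    {X : ι → Ω → ℝ} (hX : iIndepFun X μ) (hmeas : ∀ i, AEMeasurable (X i) μ) {i j k l : ι}
    (hik : i ≠ k) (hil : i ≠ l) (hjk : j ≠ k) (hjl : j ≠ l) :
    ∫ ω, X i ω * X j ω * (X k ω * X l ω) ∂μ
      = (∫ ω, X i ω * X j ω ∂μ) * ∫ ω, X k ω * X l ω ∂μ :=
  (hX.indepFun_prodMk_prodMk₀ hmeas i j k l hik hil hjk hjl).integral_fun_comp_mul_comp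
    (f := fun x : ℝ × ℝ => x.1 * x.2) (g := fun x : ℝ × ℝ => x.1 * x.2)
    ((hmeas i).prodMk (hmeas j)) ((hmeas k).prodMk (hmeas l)) (by fun_prop) (by fun_prop)

lemma integral_sq_sum_of_orthogonal {ι : Type*} [DecidableEq ι] {Y : ι → Ω → ℝ} {s : Finset ι}
    (hY : ∀ j ∈ s, MemLp (Y j) 2 μ) {v : ℝ}
    (horth : ∀ j ∈ s, ∀ k ∈ s, ∫ ω, Y j ω * Y k ω ∂μ = if j = k then v else 0) (c : ι → ℝ) :
    ∫ ω, (∑ j ∈ s, c j * Y j ω) ^ 2 ∂μ = v * ∑ j ∈ s, c j ^ 2 := by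
  have hint : ∀ j ∈ s, ∀ k ∈ s, Integrable (fun ω => c j * c k * (Y j ω * Y k ω)) μ :=
    fun j hj k hk => ((hY j hj).integrable_mul (hY k hk)).const_mul _
  calc ∫ ω, (∑ j ∈ s, c j * Y j ω) ^ 2 ∂μ
      = ∫ ω, ∑ j ∈ s, ∑ k ∈ s, c j * c k * (Y j ω * Y k ω) ∂μ := by
        congr 1 with ω
        rw [sq, Finset.sum_mul_sum]
        exact Finset.sum_congr rfl fun j _ => Finset.sum_congr rfl fun k _ => by ring
    _ = ∑ j ∈ s, ∑ k ∈ s, c j * c k * ∫ ω, Y j ω * Y k ω ∂μ := by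
        rw [integral_finsetSum _ fun j hj => integrable_finsetSum _ (hint j hj)]
        refine Finset.sum_congr rfl fun j hj => ?_
        rw [integral_finsetSum _ (hint j hj)]
        exact Finset.sum_congr rfl fun k _ => integral_const_mul _ _
    _ = v * ∑ j ∈ s, c j ^ 2 := by
        rw [Finset.mul_sum]
        refine Finset.sum_congr rfl fun j hj => ?_
        rw [Finset.sum_congr rfl fun k hk => by rw [horth j hj k hk, mul_ite, mul_zero],
          Finset.sum_ite_eq, if_pos hj]
        ring

end General

lemma sum_Ioc_one_div_four_mul_sq_sub_one {p q : ℕ} (hpq : p ≤ q) :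
    ∑ j ∈ Finset.Ioc p q, (1 : ℝ) / (4 * (j : ℝ) ^ 2 - 1)
      = (1 / (2 * (p : ℝ) + 1) - 1 / (2 * (q : ℝ) + 1)) / 2 := by
  induction q, hpq using Nat.le_induction with
  | base => simp
  | succ q hpq ih =>
    rw [Finset.sum_Ioc_succ_top (by omega), ih]
    have hq : (0 : ℝ) < 2 * q + 1 := by positivity
    have hfactor : 4 * ((q + 1 : ℕ) : ℝ) ^ 2 - 1 = (2 * q + 1) * (2 * (q + 1 : ℕ) + 1) := by
      push_cast
      ring
    rw [hfactor]
    field_simp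
    push_cast
    ring

section TruncatedExpansion

variable {Ω : Type*}

def areaTerm (ζ : Fin 2 → ℕ → Ω → ℝ) (j : ℕ) (ω : Ω) : ℝ :=
  ζ 0 (j - 1) ω * ζ 1 j ω - ζ 0 j ω * ζ 1 (j - 1) ω

noncomputable def truncatedExpansion (t T : ℝ) (ζ : Fin 2 → ℕ → Ω → ℝ) (q : ℕ) (ω : Ω) : ℝ :=
  (T - t) / 2 * (ζ 0 0 ω * ζ 1 0 ω
    + ∑ j ∈ Finset.Icc 1 q, 1 / Real.sqrt (4 * (j : ℝ) ^ 2 - 1) * areaTerm ζ j ω)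

lemma truncatedExpansion_sub_eq_sum (t T : ℝ) (ζ : Fin 2 → ℕ → Ω → ℝ) {p q : ℕ} (hpq : p ≤ q)
    (ω : Ω) :
    truncatedExpansion t T ζ q ω - truncatedExpansion t T ζ p ω = ∑ j ∈ Finset.Ioc p q,
      (T - t) / 2 * (1 / Real.sqrt (4 * (j : ℝ) ^ 2 - 1)) * areaTerm ζ j ω := by
  have hIcc : ∀ n, Finset.Icc 1 n = Finset.Ioc 0 n := Finset.Icc_add_one_left_eq_Ioc 0
  simp only [truncatedExpansion, mul_assoc, ← Finset.mul_sum]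
  rw [hIcc, hIcc, ← Finset.sum_Ioc_consecutive _ (Nat.zero_le p) hpq]
  ring

variable [MeasurableSpace Ω] {μ : Measure Ω} {ζ : Fin 2 → ℕ → Ω → ℝ}

lemma memLp_cross (hlaw : ∀ i j, HasLaw (ζ i j) (gaussianReal 0 1) μ) (a b : ℕ) :
    MemLp (fun ω => ζ 0 a ω * ζ 1 b ω) 2 μ :=
  memLp_two_mul_of_memLp_four ((hlaw 0 a).memLp_gaussianReal 4) ((hlaw 1 b).memLp_gaussianReal 4)

lemma memLp_areaTerm (hlaw : ∀ i j, HasLaw (ζ i j) (gaussianReal 0 1) μ) (j : ℕ) :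
    MemLp (areaTerm ζ j) 2 μ :=
  (memLp_cross hlaw (j - 1) j).sub (memLp_cross hlaw j (j - 1))

lemma integral_cross_mul_cross (hindep : iIndepFun (fun p : Fin 2 × ℕ => ζ p.1 p.2) μ)
    (hlaw : ∀ i j, HasLaw (ζ i j) (gaussianReal 0 1) μ) (a b c d : ℕ) :
    ∫ ω, ζ 0 a ω * ζ 1 b ω * (ζ 0 c ω * ζ 1 d ω) ∂μ
      = (if a = c then 1 else 0) * (if b = d then 1 else 0) := by
  have hmeas : ∀ p : Fin 2 × ℕ, AEMeasurable (ζ p.1 p.2) μ := fun p => (hlaw p.1 p.2).aemeasurable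
  have hmean : ∀ p : Fin 2 × ℕ, ∫ ω, ζ p.1 p.2 ω ∂μ = 0 :=
    fun p => (hlaw p.1 p.2).integral_gaussianReal
  have hsq : ∀ p : Fin 2 × ℕ, ∫ ω, ζ p.1 p.2 ω ^ 2 ∂μ = 1 := fun p => by
    simpa using (hlaw p.1 p.2).integral_sq_gaussianReal
  have horth := integral_mul_eq_ite_of_iIndepFun hindep hmeas hmean hsq
  calc ∫ ω, ζ 0 a ω * ζ 1 b ω * (ζ 0 c ω * ζ 1 d ω) ∂μ
      = ∫ ω, ζ 0 a ω * ζ 0 c ω * (ζ 1 b ω * ζ 1 d ω) ∂μ := by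
        congr 1 with ω
        ring
    _ = (∫ ω, ζ 0 a ω * ζ 0 c ω ∂μ) * ∫ ω, ζ 1 b ω * ζ 1 d ω ∂μ :=
        integral_mul_mul_mul_of_iIndepFun hindep hmeas (i := (0, a)) (j := (0, c)) (k := (1, b))
          (l := (1, d)) (by simp) (by simp) (by simp) (by simp)
    _ = _ := by
        rw [horth (0, a) (0, c), horth (1, b) (1, d)]
        simp

lemma integral_areaTerm_mul_areaTerm (hindep : iIndepFun (fun p : Fin 2 × ℕ => ζ p.1 p.2) μ)
    (hlaw : ∀ i j, HasLaw (ζ i j) (gaussianReal 0 1) μ) {j k : ℕ} (hj : 1 ≤ j) (hk : 1 ≤ k) :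
    ∫ ω, areaTerm ζ j ω * areaTerm ζ k ω ∂μ = if j = k then 2 else 0 := by
  have hint : ∀ a b c d, Integrable (fun ω => ζ 0 a ω * ζ 1 b ω * (ζ 0 c ω * ζ 1 d ω)) μ :=
    fun a b c d => (memLp_cross hlaw a b).integrable_mul (memLp_cross hlaw c d)
  have hexpand : ∀ ω, areaTerm ζ j ω * areaTerm ζ k ω
      = (ζ 0 (j - 1) ω * ζ 1 j ω * (ζ 0 (k - 1) ω * ζ 1 k ω)
          - ζ 0 (j - 1) ω * ζ 1 j ω * (ζ 0 k ω * ζ 1 (k - 1) ω))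
        - (ζ 0 j ω * ζ 1 (j - 1) ω * (ζ 0 (k - 1) ω * ζ 1 k ω)
          - ζ 0 j ω * ζ 1 (j - 1) ω * (ζ 0 k ω * ζ 1 (k - 1) ω)) := fun ω => by
    unfold areaTerm
    ring
  simp_rw [hexpand]
  rw [integral_sub, integral_sub, integral_sub]
  · simp only [integral_cross_mul_cross hindep hlaw]
    split_ifs <;> first | omega | norm_num
  all_goals first | exact hint _ _ _ _ | exact (hint _ _ _ _).sub (hint _ _ _ _)

lemma integral_sq_truncatedExpansion_sub (t T : ℝ)
    (hindep : iIndepFun (fun p : Fin 2 × ℕ => ζ p.1 p.2) μ)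
    (hlaw : ∀ i j, HasLaw (ζ i j) (gaussianReal 0 1) μ) {p q : ℕ} (hpq : p ≤ q) :
    ∫ ω, (truncatedExpansion t T ζ q ω - truncatedExpansion t T ζ p ω) ^ 2 ∂μ
      = (T - t) ^ 2 / 2 * ∑ j ∈ Finset.Ioc p q, (1 : ℝ) / (4 * (j : ℝ) ^ 2 - 1) := by
  have hpos : ∀ j ∈ Finset.Ioc p q, 1 ≤ j := fun j hj => by
    have := (Finset.mem_Ioc.1 hj).1
    omega
  simp_rw [truncatedExpansion_sub_eq_sum t T ζ hpq]
  rw [integral_sq_sum_of_orthogonal (fun j _ => memLp_areaTerm hlaw j)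
    (fun j hj k hk => integral_areaTerm_mul_areaTerm hindep hlaw (hpos j hj) (hpos k hk)),
    Finset.mul_sum, Finset.mul_sum]
  refine Finset.sum_congr rfl fun j hj => ?_
  have hj : (0 : ℝ) ≤ 4 * (j : ℝ) ^ 2 - 1 := by
    have : (1 : ℝ) ≤ j := by exact_mod_cast hpos j hj
    nlinarith
  rw [mul_pow, div_pow, div_pow, one_pow, Real.sq_sqrt hj]
  ring

lemma integral_sq_truncatedExpansion_sub_le (t T : ℝ)
    (hindep : iIndepFun (fun p : Fin 2 × ℕ => ζ p.1 p.2) μ)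
    (hlaw : ∀ i j, HasLaw (ζ i j) (gaussianReal 0 1) μ) (p q : ℕ) :
    ∫ ω, (truncatedExpansion t T ζ q ω - truncatedExpansion t T ζ p ω) ^ 2 ∂μ
      ≤ (T - t) ^ 2 / 4 * (1 / ((min p q : ℕ) + 1)) := by
  wlog hpq : p ≤ q generalizing p q
  · simpa only [min_comm, ← neg_sub (truncatedExpansion t T ζ p _), neg_sq]
      using this q p (by omega)
  rw [integral_sq_truncatedExpansion_sub t T hindep hlaw hpq,
    sum_Ioc_one_div_four_mul_sq_sub_one hpq, min_eq_left hpq]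
  have hq : (0 : ℝ) ≤ 1 / (2 * q + 1) := by positivity
  have hp : (1 : ℝ) / (2 * p + 1) ≤ 1 / (p + 1) := by
    gcongr
    linarith [(Nat.cast_nonneg p : (0 : ℝ) ≤ p)]
  calc (T - t) ^ 2 / 2 * ((1 / (2 * (p : ℝ) + 1) - 1 / (2 * q + 1)) / 2)
      = (T - t) ^ 2 / 4 * (1 / (2 * (p : ℝ) + 1) - 1 / (2 * q + 1)) := by ring
    _ ≤ (T - t) ^ 2 / 4 * (1 / (p + 1)) := by gcongr; linarith

end TruncatedExpansion

theorem truncated_expansion_cauchy_L2_general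
    {Ω : Type*} [MeasureSpace Ω]
    (t T : ℝ)
    (ζ : Fin 2 → ℕ → Ω → ℝ)
    (hindep : iIndepFun
      (fun p : Fin 2 × ℕ => ζ p.1 p.2) ℙ)
    (hgauss : ∀ i j, Measure.map (ζ i j) ℙ = gaussianReal 0 1)
    (S : ℕ → Ω → ℝ)
    (hS : ∀ q ω, S q ω = (T - t) / 2 * (ζ 0 0 ω * ζ 1 0 ω
      + ∑ j ∈ Finset.Icc 1 q, (1 / Real.sqrt (4 * (j : ℝ) ^ 2 - 1))
          * (ζ 0 (j - 1) ω * ζ 1 j ω - ζ 0 j ω * ζ 1 (j - 1) ω))) :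
    (∀ ε : ℝ, 0 < ε → ∃ N : ℕ, ∀ p q : ℕ, N ≤ p → N ≤ q →
        (∫ ω, (S q ω - S p ω) ^ 2) < ε) ∧
    (∀ p q : ℕ, p < q →
        (∫ ω, (S q ω - S p ω) ^ 2)
          = (T - t) ^ 2 / 2 * ∑ j ∈ Finset.Icc (p + 1) q, (1 : ℝ) / (4 * (j : ℝ) ^ 2 - 1)) := by
  obtain rfl : S = truncatedExpansion t T ζ := funext₂ hS
  have hlaw : ∀ i j, HasLaw (ζ i j) (gaussianReal 0 1) ℙ := fun i j => hasLaw_of_map_eq (hgauss i j)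
  refine ⟨fun ε hε => ?_, fun p q hpq => ?_⟩
  · obtain ⟨N, hN⟩ := eventually_atTop.1 <|
      (tendsto_one_div_add_atTop_nhds_zero_nat.const_mul ((T - t) ^ 2 / 4)).eventually
        (gt_mem_nhds (by simpa using hε))
    exact ⟨N, fun p q hp hq =>
      (integral_sq_truncatedExpansion_sub_le t T hindep hlaw p q).trans_lt (hN _ (le_min hp hq))⟩
  · rw [integral_sq_truncatedExpansion_sub t T hindep hlaw hpq.le, Finset.Icc_add_one_left_eq_Ioc]

/-- The truncated Legendre expansions
`S_q = (T−t)/2·(ζ^{(1)}_0 ζ^{(2)}_0 + ∑_{j=1}^q (1/√(4j²−1))(ζ^{(1)}_{j−1}ζ^{(2)}_j −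
ζ^{(1)}_j ζ^{(2)}_{j−1}))` form a Cauchy sequence in `L²(Ω)`, and for `p < q`,
`E[(S_q − S_p)²] = ((T−t)²/2) ∑_{j=p+1}^q 1/(4j²−1)`. -/
theorem truncated_expansion_cauchy_L2
    {Ω : Type*} [MeasureSpace Ω] [IsProbabilityMeasure (ℙ : Measure Ω)]
    (t T : ℝ) (htT : t < T)
    (ζ : Fin 2 → ℕ → Ω → ℝ)
    (hmeas : ∀ i j, Measurable (ζ i j))
    (hindep : iIndepFun
      (fun p : Fin 2 × ℕ => ζ p.1 p.2) ℙ)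
    (hgauss : ∀ i j, Measure.map (ζ i j) ℙ = gaussianReal 0 1)
    (S : ℕ → Ω → ℝ)
    (hS : ∀ q ω, S q ω = (T - t) / 2 * (ζ 0 0 ω * ζ 1 0 ω
      + ∑ j ∈ Finset.Icc 1 q, (1 / Real.sqrt (4 * (j : ℝ) ^ 2 - 1))
          * (ζ 0 (j - 1) ω * ζ 1 j ω - ζ 0 j ω * ζ 1 (j - 1) ω))) :
    (∀ ε : ℝ, 0 < ε → ∃ N : ℕ, ∀ p q : ℕ, N ≤ p → N ≤ q →
        (∫ ω, (S q ω - S p ω) ^ 2) < ε) ∧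
    (∀ p q : ℕ, p < q →
        (∫ ω, (S q ω - S p ω) ^ 2)
          = (T - t) ^ 2 / 2 * ∑ j ∈ Finset.Icc (p + 1) q, (1 : ℝ) / (4 * (j : ℝ) ^ 2 - 1)) :=
  truncated_expansion_cauchy_L2_general t T ζ hindep hgauss S hS
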